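/- Let α_2, ε, q_1, q_2, q_3 be positive real numbers such that the denominators below are nonzero, and define β* = (α_2 q_1 + ε(q_1 q_3 − q_1 − q_3) + α_2 ε q_3)/(α_2 q_2 + ε q_3 + α_2 ε(q_2 q_3 − q_2 − q_3)), γ* = (α_2(q_1 q_2 − q_1 − q_2) + ε q_1 + α_2 ε q_2)/(α_2 q_2 + ε q_3 + α_2 ε(q_2 q_3 − q_2 − q_3)), x_1* = q_1/(1 + β* + γ*), x_2* = q_2 β*/(1 + β* + γ*), x_3* = q_3 γ*/(1 + β* + γ*), and λ = α_2 ε(q_1 q_2 + q_2 q_3 + q_3 q_1 − q_1 q_2 q_3)/(α_2 q_1 q_2 + ε q_3 q_1 + α_2 ε q_2 q_3). Then 1 − x_1* = λ, α_2(1 − x_2*) = λ, and ε(1 − x_3*) = λ; that is, all three viral mutants grow exponentially with the same effective rate λ at this state. -/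

import Mathlib

/-! With `D` the common denominator of `β*` and `γ*`, the three numerators add up to
`L - D`, where `L = α₂q₁q₂ + εq₃q₁ + α₂εq₂q₃` is the denominator of `λ`. Hence
`1 + β* + γ* = L / D` and `x_i* = q_i N_i / L` with `N₁ = D`, `N₂`, `N₃` the numerators of
`1`, `β*`, `γ*` over `D`. Each rate `r_i (1 - x_i*)` is then `r_i (L - q_i N_i) / L`, and the
three numerators `r_i (L - q_i N_i)` are the same polynomial `α₂ε(q₁q₂ + q₂q₃ + q₃q₁ - q₁q₂q₃)`. -/

lemma mul_one_sub_div_eq_div {r a L P : ℝ} (hL : L ≠ 0) (h : r * (L - a) = P) :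
    r * (1 - a / L) = P / L := by
  rw [← h]
  field_simp

lemma mul_div_div_div_cancel_right₀ {a N D L : ℝ} (hD : D ≠ 0) : a * (N / D) / (L / D) = a * N / L := by
  rw [← mul_div_assoc, div_div_div_cancel_right₀ hD]

theorem stmt_17 (α₂ ε q₁ q₂ q₃ : ℝ)
    (βs γs x₁s x₂s x₃s lam : ℝ)
    (hden₁ : α₂ * q₂ + ε * q₃ + α₂ * ε * (q₂ * q₃ - q₂ - q₃) ≠ 0)
    (hden₂ : α₂ * q₁ * q₂ + ε * q₃ * q₁ + α₂ * ε * q₂ * q₃ ≠ 0)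
    (hβ : βs = (α₂ * q₁ + ε * (q₁ * q₃ - q₁ - q₃) + α₂ * ε * q₃) /
      (α₂ * q₂ + ε * q₃ + α₂ * ε * (q₂ * q₃ - q₂ - q₃)))
    (hγ : γs = (α₂ * (q₁ * q₂ - q₁ - q₂) + ε * q₁ + α₂ * ε * q₂) /
      (α₂ * q₂ + ε * q₃ + α₂ * ε * (q₂ * q₃ - q₂ - q₃)))
    (hx₁ : x₁s = q₁ / (1 + βs + γs))
    (hx₂ : x₂s = q₂ * βs / (1 + βs + γs))
    (hx₃ : x₃s = q₃ * γs / (1 + βs + γs))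
    (hlam : lam = α₂ * ε * (q₁ * q₂ + q₂ * q₃ + q₃ * q₁ - q₁ * q₂ * q₃) /
      (α₂ * q₁ * q₂ + ε * q₃ * q₁ + α₂ * ε * q₂ * q₃)) :
    1 - x₁s = lam ∧ α₂ * (1 - x₂s) = lam ∧ ε * (1 - x₃s) = lam := by
  set D := α₂ * q₂ + ε * q₃ + α₂ * ε * (q₂ * q₃ - q₂ - q₃)
  set L := α₂ * q₁ * q₂ + ε * q₃ * q₁ + α₂ * ε * q₂ * q₃
  have hsum : 1 + βs + γs = L / D := by
    rw [hβ, hγ, eq_div_iff hden₁]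
    field_simp
    ring
  rw [hsum] at hx₁ hx₂ hx₃
  rw [hβ, mul_div_div_div_cancel_right₀ hden₁] at hx₂
  rw [hγ, mul_div_div_div_cancel_right₀ hden₁] at hx₃
  rw [div_div_eq_mul_div] at hx₁
  subst hx₁ hx₂ hx₃ hlam
  refine ⟨?_, ?_, ?_⟩
  · simpa using mul_one_sub_div_eq_div (r := 1) hden₂ (by ring)
  · exact mul_one_sub_div_eq_div hden₂ (by ring)
  · exact mul_one_sub_div_eq_div hden₂ (by ring)
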